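/- For every μ > 0, the matrix A_μ := I_m + μ·Iinv·D is invertible and μ·eᵀ·D·A_μ⁻¹·e = z(μ), where z(μ) := eᵀ(μ⁻¹D⁻¹ + Iinv)⁻¹e. -/
import Mathlib


open Matrix

/-- The sinc integrand `sin(πt)/(πt)`, extended by the value 1 at `t = 0`. -/
noncomputable def sincFn (t : ℝ) : ℝ :=
  if t = 0 then 1 else Real.sin (Real.pi * t) / (Real.pi * t)

/-- The `m × m` Toeplitz matrix `Iinv(k,l) = 1/2 + ∫₀^{k-l} sin(πt)/(πt) dt`. -/
noncomputable def IinvMat (m : ℕ) : Matrix (Fin m) (Fin m) ℝ :=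
  fun k l => 1 / 2 + ∫ t in (0 : ℝ)..((k : ℝ) - (l : ℝ)), sincFn t

/-- The skew-symmetric part `S = (Iinv - Iinvᵀ)/2`. -/
noncomputable def Smat (m : ℕ) : Matrix (Fin m) (Fin m) ℝ :=
  (2 : ℝ)⁻¹ • (IinvMat m - (IinvMat m)ᵀ)

/-- The all-ones vector `e ∈ ℝ^m`. -/
def eVec (m : ℕ) : Fin m → ℝ := fun _ => 1

lemma sincFn_even (t : ℝ) : sincFn (-t) = sincFn t := by
  unfold sincFn
  by_cases h : t = 0
  · simp [h]
  · rw [if_neg (by simpa using h), if_neg h, mul_neg, Real.sin_neg, neg_div_neg_eq]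

lemma integral_sinc_neg (a : ℝ) :
    (∫ t in (0:ℝ)..(-a), sincFn t) = -∫ t in (0:ℝ)..a, sincFn t := by
  have h1 : (∫ t in (0:ℝ)..a, sincFn (-t)) = ∫ t in (-a)..(0:ℝ), sincFn t := by
    simpa using intervalIntegral.integral_comp_neg (a := (0:ℝ)) (b := a) sincFn
  have h2 : (∫ t in (0:ℝ)..a, sincFn (-t)) = ∫ t in (0:ℝ)..a, sincFn t := by
    simp [sincFn_even]
  rw [intervalIntegral.integral_symm, ← h1, h2]

lemma IinvMat_add_sym (m : ℕ) (k l : Fin m) : IinvMat m k l + IinvMat m l k = 1 := by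
  unfold IinvMat
  have : ((l : ℝ) - (k : ℝ)) = -((k : ℝ) - (l : ℝ)) := by ring
  rw [this, integral_sinc_neg]
  ring

lemma quadIinv (m : ℕ) (v : Fin m → ℝ) :
    2 * (v ⬝ᵥ (IinvMat m).mulVec v) = (∑ j, v j)^2 := by
  have key : ∀ k l : Fin m, IinvMat m k l + IinvMat m l k = 1 := IinvMat_add_sym m
  have expand : v ⬝ᵥ (IinvMat m).mulVec v = ∑ k, ∑ l, v k * (IinvMat m k l * v l) := by
    simp [dotProduct, mulVec, Finset.mul_sum]
  have swap : v ⬝ᵥ (IinvMat m).mulVec v = ∑ k, ∑ l, v l * (IinvMat m l k * v k) := by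
    rw [expand, Finset.sum_comm]
  calc 2 * (v ⬝ᵥ (IinvMat m).mulVec v)
      = (∑ k, ∑ l, v k * (IinvMat m k l * v l)) +
        (∑ k, ∑ l, v l * (IinvMat m l k * v k)) := by rw [← expand, ← swap]; ring
    _ = ∑ k, ∑ l, (v k * v l) * (IinvMat m k l + IinvMat m l k) := by
        rw [← Finset.sum_add_distrib]
        refine Finset.sum_congr rfl fun k _ => ?_
        rw [← Finset.sum_add_distrib]
        refine Finset.sum_congr rfl fun l _ => ?_
        ring
    _ = ∑ k, ∑ l, v k * v l := by
        refine Finset.sum_congr rfl fun k _ => Finset.sum_congr rfl fun l _ => ?_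
        rw [key k l]; ring
    _ = (∑ j, v j)^2 := by rw [sq, Finset.sum_mul_sum]

theorem stmt5 (m : ℕ) (d : Fin m → ℝ) (hd : ∀ j, 0 < d j) (μ : ℝ) (hμ : 0 < μ) :
    let D : Matrix (Fin m) (Fin m) ℝ := Matrix.diagonal d
    let A : Matrix (Fin m) (Fin m) ℝ := 1 + μ • (IinvMat m * D)
    IsUnit A ∧
      μ * (eVec m ⬝ᵥ (D * A⁻¹).mulVec (eVec m)) =
        eVec m ⬝ᵥ (μ⁻¹ • D⁻¹ + IinvMat m)⁻¹.mulVec (eVec m) := by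
  intro D A
  have hDdet : IsUnit D.det := by
    rw [Matrix.det_diagonal]
    exact (Finset.prod_pos (fun j _ => hd j)).ne'.isUnit
  -- invertibility of A
  have hA : IsUnit A := by
    rw [Matrix.isUnit_iff_isUnit_det, isUnit_iff_ne_zero]
    intro hdet
    obtain ⟨x, hx, hAx⟩ := (Matrix.exists_mulVec_eq_zero_iff).2 hdet
    set v : Fin m → ℝ := fun j => d j * x j with hv
    have hDx : D.mulVec x = v := by
      funext i; simp [D, Matrix.mulVec_diagonal, hv]
    have hkey : x ⬝ᵥ D.mulVec (A.mulVec x) =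
        (∑ i, d i * x i * x i) + μ * (v ⬝ᵥ (IinvMat m).mulVec v) := by
      have : A.mulVec x = x + μ • (IinvMat m).mulVec (D.mulVec x) := by
        simp [A, Matrix.add_mulVec, Matrix.smul_mulVec, ← Matrix.mulVec_mulVec]
      rw [this, Matrix.mulVec_add, Matrix.mulVec_smul, dotProduct_add, dotProduct_smul,
        hDx]
      have t2 : x ⬝ᵥ D.mulVec ((IinvMat m).mulVec v) = v ⬝ᵥ (IinvMat m).mulVec v := by
        simp [D, dotProduct, Matrix.mulVec_diagonal, hv, mul_assoc, mul_comm, mul_left_comm]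
      have t1 : x ⬝ᵥ v = ∑ i, d i * x i * x i := by
        simp only [dotProduct, hv]
        exact Finset.sum_congr rfl fun i _ => by ring
      rw [t2, t1, smul_eq_mul]
    rw [hAx, Matrix.mulVec_zero, dotProduct_zero] at hkey
    have h1 : 0 < ∑ i, d i * x i * x i := by
      obtain ⟨i, hi⟩ := Function.ne_iff.1 hx
      refine Finset.sum_pos' (fun j _ => ?_) ⟨i, Finset.mem_univ i, ?_⟩
      · have := (hd j).le; nlinarith [mul_self_nonneg (x j)]
      · have : x i ≠ 0 := by simpa using hi
        nlinarith [hd i, (mul_self_pos).2 this]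
    have h2 : 0 ≤ v ⬝ᵥ (IinvMat m).mulVec v := by
      have := quadIinv m v
      nlinarith [sq_nonneg (∑ j, v j)]
    nlinarith
  refine ⟨hA, ?_⟩
  -- the algebraic identity
  have hAinv : A * A⁻¹ = 1 := Matrix.mul_nonsing_inv A ((Matrix.isUnit_iff_isUnit_det A).1 hA)
  have hDinv : D⁻¹ * D = 1 := Matrix.nonsing_inv_mul D hDdet
  have hInvEq : (μ⁻¹ • D⁻¹ + IinvMat m)⁻¹ = μ • (D * A⁻¹) := by
    refine Matrix.inv_eq_right_inv ?_
    have h1 : (μ⁻¹ • D⁻¹) * (μ • (D * A⁻¹)) = A⁻¹ := by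
      rw [Matrix.smul_mul, Matrix.mul_smul, smul_smul, inv_mul_cancel₀ hμ.ne', one_smul,
        ← Matrix.mul_assoc, hDinv, Matrix.one_mul]
    have h2 : IinvMat m * (μ • (D * A⁻¹)) = μ • ((IinvMat m * D) * A⁻¹) := by
      rw [Matrix.mul_smul, Matrix.mul_assoc]
    rw [Matrix.add_mul, h1, h2, ← Matrix.smul_mul]
    calc A⁻¹ + (μ • (IinvMat m * D)) * A⁻¹ = (1 + μ • (IinvMat m * D)) * A⁻¹ := by
          rw [Matrix.add_mul, Matrix.one_mul]
      _ = 1 := hAinv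
  rw [hInvEq, Matrix.smul_mulVec, dotProduct_smul, smul_eq_mul]
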